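/- Let ε > 0 and u > 0 be such that λ(B(1, u, ε)) > 0, and let s^{ε,u} ∈ (0,1) be the unique zero of s ↦ λ(B(s, u, ε)). Then μ̄(s^{ε,u}) ≤ u ≤ μ̂(s^{ε,u}) ≤ u + 2ε, where μ̄(s) := (1/n) Σ_{j=1}^n μ_j(s) and μ̂(s) := max_{1≤j≤n} μ_j(s). -/

import Mathlib

/-! Write `B(s*) = diag(μᵢ(s*) - u) + εT`, where `εT` has nonnegative off-diagonal entries and
zero row sums. Since `λ(B(s*)) = 0`, the quadratic form of `B(s*)` is nonpositive: on the constant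
vector it gives `∑ (μᵢ - u) ≤ 0`, and on a basis vector `eⱼ` it gives `μⱼ - u + εTⱼⱼ ≤ 0` with
`Tⱼⱼ ≥ -2`. Conversely, Gershgorin puts every eigenvalue of `B(s*)` in a disc around
`μₖ - u + εTₖₖ` of radius `-εTₖₖ` for some `k`, hence below `max μ - u`; as the largest eigenvalue
is `0`, this gives `u ≤ max μ`. -/

open Matrix Filter Set Topology Asymptotics

noncomputable section

/-- The mutation matrix `T` (discrete Neumann Laplacian): `T i j = 1` if `|i-j| = 1`,
diagonal entries `-1` at the ends and `-2` inside (minus number of neighbors), `0` otherwise. -/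
def mutT (n : ℕ) : Matrix (Fin n) (Fin n) ℝ :=
  Matrix.of fun i j =>
    if ((i : ℕ) + 1 = (j : ℕ) ∨ (j : ℕ) + 1 = (i : ℕ)) then 1
    else if i = j then
      -((if 0 < (i : ℕ) then (1 : ℝ) else 0) + (if (i : ℕ) + 1 < n then (1 : ℝ) else 0))
    else 0

/-- Monod kinetics `μ(s) = m s / (a + s)`. -/
def monod (m a s : ℝ) : ℝ := m * s / (a + s)

/-- The largest eigenvalue of a (symmetric) real matrix. -/
def maxEig {n : ℕ} (A : Matrix (Fin n) (Fin n) ℝ) : ℝ :=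
  sSup {t : ℝ | ∃ v : Fin n → ℝ, v ≠ 0 ∧ A.mulVec v = t • v}

/-- The matrix `B(s,u,ε) = diag(μ₁(s),…,μₙ(s)) - u Iₙ + ε T`. -/
def Bmat (n : ℕ) (m a : Fin n → ℝ) (s u ε : ℝ) : Matrix (Fin n) (Fin n) ℝ :=
  Matrix.diagonal (fun i => monod (m i) (a i) s) - u • (1 : Matrix (Fin n) (Fin n) ℝ)
    + ε • mutT n

/-- `(x, s)` is a solution of the chemostat system with mutation (S). -/
def IsSol (n : ℕ) (m a : Fin n → ℝ) (ε u : ℝ) (x : ℝ → Fin n → ℝ) (s : ℝ → ℝ) : Prop :=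
  ∀ t : ℝ, 0 ≤ t →
    (∀ i, HasDerivAt (fun τ => x τ i)
        ((monod (m i) (a i) (s t) - u) * x t i + ε * (mutT n).mulVec (x t) i) t) ∧
    HasDerivAt s (-(∑ j, monod (m j) (a j) (s t) * x t j) + u * (1 - s t)) t

/-- Admissible initial conditions `D = (ℝ₊ⁿ \ {0}) × [0,1]`. -/
def InD (n : ℕ) (x0 : Fin n → ℝ) (s0 : ℝ) : Prop :=
  (∀ i, 0 ≤ x0 i) ∧ x0 ≠ 0 ∧ s0 ∈ Set.Icc (0 : ℝ) 1

namespace Matrix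

section MaxEig

variable {n : ℕ} {A : Matrix (Fin n) (Fin n) ℝ}

lemma maxEig_eq_sSup_spectrum (A : Matrix (Fin n) (Fin n) ℝ) :
    maxEig A = sSup (spectrum ℝ A) := by
  unfold maxEig
  congr 1
  ext t
  rw [← spectrum_toLin', ← Module.End.hasEigenvalue_iff_mem_spectrum,
    Module.End.hasEigenvalue_iff, Submodule.ne_bot_iff]
  simp [and_comm]

lemma le_maxEig_of_mem_spectrum {t : ℝ} (ht : t ∈ spectrum ℝ A) : t ≤ maxEig A :=
  maxEig_eq_sSup_spectrum A ▸ le_csSup A.finite_spectrum.bddAbove ht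

lemma IsHermitian.maxEig_le [NeZero n] (hA : A.IsHermitian) {c : ℝ}
    (h : ∀ t ∈ spectrum ℝ A, t ≤ c) : maxEig A ≤ c := by
  rw [maxEig_eq_sSup_spectrum, hA.spectrum_real_eq_range_eigenvalues] at *
  exact csSup_le (Set.range_nonempty _) h

lemma IsHermitian.dotProduct_mulVec_le_maxEig (hA : A.IsHermitian) (w : Fin n → ℝ) :
    w ⬝ᵥ A *ᵥ w ≤ maxEig A * (w ⬝ᵥ w) := by
  have hpsd : (algebraMap ℝ _ (maxEig A) - A).PosSemidef := by
    refine posSemidef_iff_isHermitian_and_spectrum_nonneg.mpr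
      ⟨(isHermitian_diagonal _).sub hA, ?_⟩
    rw [← spectrum.singleton_sub_eq]
    rintro _ ⟨_, rfl, t, ht, rfl⟩
    exact sub_nonneg.mpr (le_maxEig_of_mem_spectrum ht)
  have := hpsd.dotProduct_mulVec_nonneg w
  rw [Algebra.algebraMap_eq_smul_one, star_trivial, sub_mulVec, smul_mulVec, one_mulVec,
    dotProduct_sub, dotProduct_smul, smul_eq_mul] at this
  linarith

lemma IsHermitian.diag_le_maxEig (hA : A.IsHermitian) (i : Fin n) : A i i ≤ maxEig A := by
  simpa [mulVec_single, single_dotProduct] using hA.dotProduct_mulVec_le_maxEig (Pi.single i 1)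

end MaxEig

section RowSumZero

variable {ι : Type*} [Fintype ι] [DecidableEq ι] {Q : Matrix ι ι ℝ}

lemma sum_erase_abs_eq_neg_diag (hoff : ∀ i j, i ≠ j → 0 ≤ Q i j)
    (hrow : ∀ i, ∑ j, Q i j = 0) (i : ι) :
    ∑ j ∈ Finset.univ.erase i, |Q i j| = -Q i i := by
  rw [Finset.sum_congr rfl fun j hj => abs_of_nonneg (hoff i j (Finset.ne_of_mem_erase hj).symm)]
  linarith [Finset.sum_erase_add Finset.univ (Q i) (Finset.mem_univ i), hrow i]

lemma exists_le_of_mem_spectrum_diagonal_add (hoff : ∀ i j, i ≠ j → 0 ≤ Q i j)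
    (hrow : ∀ i, ∑ j, Q i j = 0) {d : ι → ℝ} {t : ℝ} (ht : t ∈ spectrum ℝ (diagonal d + Q)) :
    ∃ k, t ≤ d k := by
  rw [← spectrum_toLin', ← Module.End.hasEigenvalue_iff_mem_spectrum] at ht
  obtain ⟨k, hk⟩ := eigenvalue_mem_ball ht
  refine ⟨k, ?_⟩
  have hradius : ∑ j ∈ Finset.univ.erase k, ‖(diagonal d + Q) k j‖ = -Q k k := by
    rw [← sum_erase_abs_eq_neg_diag hoff hrow k]
    refine Finset.sum_congr rfl fun j hj => ?_
    rw [add_apply, diagonal_apply_ne _ (Finset.ne_of_mem_erase hj).symm, zero_add,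
      Real.norm_eq_abs]
  rw [hradius, Metric.mem_closedBall, Real.dist_eq, add_apply, diagonal_apply_eq] at hk
  linarith [(abs_le.mp hk).2]

lemma one_dotProduct_diagonal_add_mulVec_one (hrow : ∀ i, ∑ j, Q i j = 0) (d : ι → ℝ) :
    1 ⬝ᵥ (diagonal d + Q) *ᵥ 1 = ∑ i, d i := by
  have hQ : Q *ᵥ 1 = 0 := funext fun i => by simp [mulVec, dotProduct, hrow]
  simp [add_mulVec, hQ, mulVec_diagonal, dotProduct]

end RowSumZero

end Matrix

lemma Fin.sum_ite_succ_eq {n : ℕ} (i : Fin n) :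
    ∑ j : Fin n, (if (i : ℕ) + 1 = j then (1 : ℝ) else 0) = if (i : ℕ) + 1 < n then 1 else 0 := by
  split_ifs with h
  · rw [Finset.sum_eq_single ⟨i + 1, h⟩ (fun j _ hj => if_neg fun e => hj (Fin.ext e.symm))
      (by simp), if_pos rfl]
  · exact Finset.sum_eq_zero fun j _ => if_neg fun e => h (by omega)

lemma Fin.sum_ite_pred_eq {n : ℕ} (i : Fin n) :
    ∑ j : Fin n, (if (j : ℕ) + 1 = i then (1 : ℝ) else 0) = if 0 < (i : ℕ) then 1 else 0 := by
  split_ifs with h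
  · rw [Finset.sum_eq_single ⟨i - 1, by omega⟩
      (fun j _ hj => if_neg fun e => hj (Fin.ext (by simp; omega))) (by simp),
      if_pos (by simp; omega)]
  · exact Finset.sum_eq_zero fun j _ => if_neg (by omega)

section MutT

variable {n : ℕ}

lemma mutT_apply_eq_add (i j : Fin n) :
    mutT n i j = (if (i : ℕ) + 1 = j then 1 else 0) + (if (j : ℕ) + 1 = i then 1 else 0)
      + if i = j then -((if 0 < (i : ℕ) then 1 else 0) + (if (i : ℕ) + 1 < n then 1 else 0))
        else 0 := by
  simp only [mutT, of_apply, Fin.ext_iff]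
  split_ifs <;> first | omega | norm_num

lemma sum_mutT_apply (i : Fin n) : ∑ j, mutT n i j = 0 := by
  simp only [mutT_apply_eq_add, Finset.sum_add_distrib, Fin.sum_ite_succ_eq, Fin.sum_ite_pred_eq,
    Finset.sum_ite_eq, Finset.mem_univ, if_true]
  ring

lemma mutT_nonneg_of_ne {i j : Fin n} (h : i ≠ j) : 0 ≤ mutT n i j := by
  simp only [mutT, of_apply, if_neg h]
  split_ifs <;> norm_num

lemma neg_two_le_mutT_apply_self (i : Fin n) : -2 ≤ mutT n i i := by
  simp only [mutT, of_apply]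
  split_ifs <;> norm_num

variable (n) in
lemma mutT_isHermitian : (mutT n).IsHermitian := by
  ext i j
  simp only [conjTranspose_apply, star_trivial, mutT, of_apply]
  by_cases h : i = j
  · subst h; rfl
  · simp only [if_neg (Ne.symm h), if_neg h, or_comm]

end MutT

lemma Bmat_eq_diagonal_add (n : ℕ) (m a : Fin n → ℝ) (s u ε : ℝ) :
    Bmat n m a s u ε = diagonal (fun i => monod (m i) (a i) s - u) + ε • mutT n := by
  ext i j
  by_cases h : i = j
  · subst h; simp [Bmat]
  · simp [Bmat, diagonal_apply_ne _ h, one_apply_ne h]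

theorem stmt_8_general (n : ℕ) (hn : 1 ≤ n) (m a : Fin n → ℝ)
    (ε u : ℝ) (hε : 0 < ε)
    (sstar : ℝ)
    (hzero : maxEig (Bmat n m a sstar u ε) = 0) :
    (1 / (n : ℝ)) * ∑ j, monod (m j) (a j) sstar ≤ u ∧
    u ≤ ⨆ j : Fin n, monod (m j) (a j) sstar ∧
    (⨆ j : Fin n, monod (m j) (a j) sstar) ≤ u + 2 * ε := by
  have : NeZero n := ⟨by omega⟩
  set μ : Fin n → ℝ := fun j => monod (m j) (a j) sstar
  have hoff : ∀ i j, i ≠ j → 0 ≤ (ε • mutT n) i j := fun i j h =>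
    mul_nonneg hε.le (mutT_nonneg_of_ne h)
  have hrow : ∀ i, ∑ j, (ε • mutT n) i j = 0 := fun i => by
    simp only [Matrix.smul_apply, smul_eq_mul, ← Finset.mul_sum, sum_mutT_apply, mul_zero]
  have hB := Bmat_eq_diagonal_add n m a sstar u ε
  have hBh : (Bmat n m a sstar u ε).IsHermitian := by
    rw [hB]; exact (isHermitian_diagonal _).add ((mutT_isHermitian n).smul (IsSelfAdjoint.all ε))
  refine ⟨?_, ?_, ciSup_le fun j => ?_⟩
  · have h := hBh.dotProduct_mulVec_le_maxEig 1
    rw [hzero, zero_mul, hB, one_dotProduct_diagonal_add_mulVec_one hrow,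
      Finset.sum_sub_distrib] at h
    rw [one_div_mul_eq_div, div_le_iff₀ (by exact_mod_cast hn)]
    simpa [mul_comm] using h
  · have h : maxEig (Bmat n m a sstar u ε) ≤ (⨆ j, μ j) - u := hBh.maxEig_le fun t ht => by
      rw [hB] at ht
      obtain ⟨k, hk⟩ := exists_le_of_mem_spectrum_diagonal_add hoff hrow ht
      linarith [le_ciSup (Finite.bddAbove_range μ) k]
    linarith
  · have h := hBh.diag_le_maxEig j
    rw [hzero, hB] at h
    simp only [Matrix.add_apply, diagonal_apply_eq, Matrix.smul_apply, smul_eq_mul] at h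
    linarith [mul_le_mul_of_nonneg_left (neg_two_le_mutT_apply_self j) hε.le]

/-- at the coexistence substrate value `s* = s^{ε,u}` (the zero of
`s ↦ λ(B(s,u,ε))`) one has `μ̄(s*) ≤ u ≤ μ̂(s*) ≤ u + 2ε`. -/
theorem stmt_8 (n : ℕ) (hn : 1 ≤ n) (m a : Fin n → ℝ)
    (hm : ∀ i, 0 < m i) (ha : ∀ i, 0 < a i)
    (ε u : ℝ) (hε : 0 < ε) (hu : 0 < u)
    (hpos : 0 < maxEig (Bmat n m a 1 u ε))
    (sstar : ℝ) (hs : sstar ∈ Set.Ioo (0 : ℝ) 1)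
    (hzero : maxEig (Bmat n m a sstar u ε) = 0) :
    (1 / (n : ℝ)) * ∑ j, monod (m j) (a j) sstar ≤ u ∧
    u ≤ ⨆ j : Fin n, monod (m j) (a j) sstar ∧
    (⨆ j : Fin n, monod (m j) (a j) sstar) ≤ u + 2 * ε :=
  stmt_8_general n hn m a ε u hε sstar hzero
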